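/- arXiv:1904.13225 — 5 statements merged into one kernel-verified Lean document; each statement's English description precedes it below -/
import Mathlib

section
/- For any simple graph G on n ≥ 3 vertices, q_2(G) + q_2(\overline{G}) ≥ n - 2, where q_2 denotes the second largest eigenvalue of the signless Laplacian matrix. -/
/-!
Weyl's inequality, made explicit. Since `Q(G) + Q(Gᶜ) = Q(Kₙ) = (n - 2) I + J` with `J ⪰ 0`, its
quadratic form is at least `(n - 2) ‖x‖²`. On the hyperplane orthogonal to an eigenvector for
`q₁(G)` the quadratic form of `Q(G)` is at most `q₂(G) ‖x‖²`, and likewise for `Gᶜ`. For `n ≥ 3`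
these two hyperplanes share a nonzero vector `x`, and evaluating both bounds at `x` gives
`n - 2 ≤ q₂(G) + q₂(Gᶜ)`.
-/

open Matrix

/-- The signless Laplacian matrix `Q(G) = D(G) + A(G)` of a simple graph. -/
noncomputable def signlessLaplacian {V : Type*} [Fintype V] [DecidableEq V]
    (G : SimpleGraph V) : Matrix V V ℝ :=
  letI := Classical.decRel G.Adj
  Matrix.diagonal (fun v => (G.degree v : ℝ)) + G.adjMatrix ℝ

/-- The multiset of eigenvalues (with multiplicity) of a real symmetric matrix. -/
noncomputable def eigMultiset {V : Type*} [Fintype V] [DecidableEq V]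
    (A : Matrix V V ℝ) : Multiset ℝ :=
  if h : A.IsHermitian then Finset.univ.val.map h.eigenvalues else 0

/-- The `k`-th largest eigenvalue (1-indexed) of a real symmetric matrix. -/
noncomputable def kthEig {V : Type*} [Fintype V] [DecidableEq V]
    (A : Matrix V V ℝ) (k : ℕ) : ℝ :=
  ((eigMultiset A).sort (· ≥ ·)).getD (k - 1) 0

/-- Degree of a vertex, with classical decidability of adjacency. -/
noncomputable def gdeg {V : Type*} [Fintype V] (G : SimpleGraph V) (v : V) : ℕ :=
  letI := Classical.decRel G.Adj
  G.degree v

/-- The `k`-th largest degree (1-indexed, with multiplicity) of a graph. -/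
noncomputable def kthLargestDegree {V : Type*} [Fintype V] (G : SimpleGraph V) (k : ℕ) : ℕ :=
  ((Finset.univ.val.map (gdeg G)).sort (· ≥ ·)).getD (k - 1) 0

lemma List.le_getD_zero_of_pairwise_ge {α : Type*} [Preorder α] {l : List α}
    (hl : l.Pairwise (· ≥ ·)) {x : α} (hx : x ∈ l) (d : α) : x ≤ l.getD 0 d := by
  cases l with
  | nil => simp at hx
  | cons a t =>
    rcases List.mem_cons.mp hx with rfl | hxt
    · exact le_rfl
    · exact List.rel_of_pairwise_cons hl hxt

lemma exists_forall_ne_le_sort_getD_one {ι α : Type*} [Fintype ι] [Nonempty ι] [LinearOrder α]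
    (f : ι → α) (d : α) :
    ∃ i₀, ∀ i ≠ i₀, f i ≤ ((Finset.univ.val.map f).sort (· ≥ ·)).getD 1 d := by
  classical
  obtain ⟨i₀, hmax⟩ := Finite.exists_max f
  refine ⟨i₀, fun i hi => ?_⟩
  set rest := (Finset.univ.val.erase i₀).map f
  have hsplit : Finset.univ.val.map f = f i₀ ::ₘ rest := by
    rw [← Multiset.map_cons, Multiset.cons_erase (Finset.mem_univ_val i₀)]
  have hsort : (Finset.univ.val.map f).sort (· ≥ ·) = f i₀ :: rest.sort (· ≥ ·) := by
    rw [hsplit]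
    refine Multiset.sort_cons _ _ _ fun b hb => ?_
    obtain ⟨j, -, rfl⟩ := Multiset.mem_map.mp hb
    exact hmax j
  have hmem : f i ∈ rest.sort (· ≥ ·) :=
    (Multiset.mem_sort _).mpr <|
      Multiset.mem_map_of_mem f <| (Multiset.mem_erase_of_ne hi).mpr (Finset.mem_univ_val i)
  rw [hsort, List.getD_cons_succ]
  exact List.le_getD_zero_of_pairwise_ge (Multiset.pairwise_sort _ _) hmem d

lemma exists_ne_zero_dotProduct_eq_zero_of_two_lt {K ι : Type*} [Field K] [Fintype ι]
    (u v : ι → K) (h : 2 < Fintype.card ι) :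
    ∃ x ≠ 0, u ⬝ᵥ x = 0 ∧ v ⬝ᵥ x = 0 := by
  have hker : LinearMap.ker (Matrix.of ![u, v]).mulVecLin ≠ ⊥ :=
    LinearMap.ker_ne_bot_of_finrank_lt (by simpa using h)
  obtain ⟨x, hmem, hx0⟩ := Submodule.exists_mem_ne_zero_of_ne_bot hker
  have hx : Matrix.of ![u, v] *ᵥ x = 0 := hmem
  exact ⟨x, hx0, congrFun hx 0, congrFun hx 1⟩

lemma Matrix.dotProduct_mulVec_conj_transpose {R ι : Type*} [CommSemiring R] [Fintype ι]
    (U M : Matrix ι ι R) (x : ι → R) :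
    x ⬝ᵥ ((U * M * Uᵀ) *ᵥ x) = (Uᵀ *ᵥ x) ⬝ᵥ (M *ᵥ (Uᵀ *ᵥ x)) := by
  rw [← mulVec_mulVec, ← mulVec_mulVec, dotProduct_mulVec, mulVec_transpose]

namespace Matrix.IsHermitian

variable {ι : Type*} [Fintype ι] [DecidableEq ι] {A : Matrix ι ι ℝ}

lemma eq_eigenvectorUnitary_mul_diagonal_mul_transpose (hA : A.IsHermitian) :
    A = (hA.eigenvectorUnitary : Matrix ι ι ℝ) * diagonal hA.eigenvalues *
      (hA.eigenvectorUnitary : Matrix ι ι ℝ)ᵀ := by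
  conv_lhs => rw [hA.spectral_theorem]
  simp [Unitary.conjStarAlgAut_apply, star_eq_conjTranspose]

lemma dotProduct_mulVec_le_of_eigenvalues_le (hA : A.IsHermitian) {i₀ : ι} {c : ℝ}
    (hc : ∀ i ≠ i₀, hA.eigenvalues i ≤ c) {x : ι → ℝ}
    (hx : ⇑(hA.eigenvectorBasis i₀) ⬝ᵥ x = 0) :
    x ⬝ᵥ (A *ᵥ x) ≤ c * (x ⬝ᵥ x) := by
  set U : Matrix ι ι ℝ := ↑hA.eigenvectorUnitary
  set y := Uᵀ *ᵥ x
  have hUUt : U * Uᵀ = 1 := by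
    simpa [U, star_eq_conjTranspose] using mem_unitaryGroup_iff.mp hA.eigenvectorUnitary.2
  have hnorm : x ⬝ᵥ x = y ⬝ᵥ y := by
    simpa [hUUt] using dotProduct_mulVec_conj_transpose U 1 x
  -- the rows of `Uᵀ` are the eigenvectors
  have hy₀ : y i₀ = 0 := hx
  calc x ⬝ᵥ (A *ᵥ x)
      = y ⬝ᵥ (diagonal hA.eigenvalues *ᵥ y) := by
        conv_lhs => rw [hA.eq_eigenvectorUnitary_mul_diagonal_mul_transpose]
        exact dotProduct_mulVec_conj_transpose _ _ x
    _ = ∑ i, hA.eigenvalues i * (y i * y i) := by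
        simp only [dotProduct, mulVec_diagonal]
        exact Finset.sum_congr rfl fun i _ => by ring
    _ ≤ ∑ i, c * (y i * y i) := by
        refine Finset.sum_le_sum fun i _ => ?_
        rcases eq_or_ne i i₀ with rfl | hi
        · simp [hy₀]
        · exact mul_le_mul_of_nonneg_right (hc i hi) (mul_self_nonneg _)
    _ = c * (x ⬝ᵥ x) := by rw [hnorm, dotProduct, Finset.mul_sum]

lemma exists_forall_dotProduct_mulVec_le_kthEig_two [Nonempty ι] (hA : A.IsHermitian) :
    ∃ u : ι → ℝ, ∀ x, u ⬝ᵥ x = 0 → x ⬝ᵥ (A *ᵥ x) ≤ kthEig A 2 * (x ⬝ᵥ x) := by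
  obtain ⟨i₀, hi₀⟩ := exists_forall_ne_le_sort_getD_one hA.eigenvalues 0
  refine ⟨hA.eigenvectorBasis i₀, fun x hx => hA.dotProduct_mulVec_le_of_eigenvalues_le ?_ hx⟩
  rwa [kthEig, eigMultiset, dif_pos hA]

end Matrix.IsHermitian

section SignlessLaplacian

variable {V : Type*} [Fintype V] [DecidableEq V]

lemma isHermitian_signlessLaplacian (G : SimpleGraph V) : (signlessLaplacian G).IsHermitian := by
  let _ := Classical.decRel G.Adj
  exact (isHermitian_diagonal _).add <| by
    simp [IsHermitian, conjTranspose_eq_transpose_of_trivial]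

lemma signlessLaplacian_add_compl (G : SimpleGraph V) :
    signlessLaplacian G + signlessLaplacian Gᶜ =
      ((Fintype.card V : ℝ) - 2) • (1 : Matrix V V ℝ) + of fun _ _ => 1 := by
  let _ := Classical.decRel G.Adj
  let _ := Classical.decRel Gᶜ.Adj
  ext i j
  rcases eq_or_ne i j with rfl | hij
  · have hdeg : G.degree i + Gᶜ.degree i + 1 = Fintype.card V := by
      have := G.degree_lt_card_verts i
      rw [G.degree_compl]
      omega
    have : (G.degree i : ℝ) + Gᶜ.degree i + 1 = Fintype.card V := by exact_mod_cast hdeg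
    simp [signlessLaplacian]
    linarith
  · by_cases hadj : G.Adj i j <;> simp [signlessLaplacian, hij, hadj]

lemma card_sub_two_mul_le_dotProduct_signlessLaplacian_add_compl (G : SimpleGraph V)
    (x : V → ℝ) :
    ((Fintype.card V : ℝ) - 2) * (x ⬝ᵥ x) ≤
      x ⬝ᵥ ((signlessLaplacian G + signlessLaplacian Gᶜ) *ᵥ x) := by
  have hJ : x ⬝ᵥ ((of fun _ _ => (1 : ℝ)) *ᵥ x) = (∑ i, x i) * (∑ i, x i) := by
    simp [dotProduct, mulVec, Finset.sum_mul]
  rw [signlessLaplacian_add_compl, add_mulVec, dotProduct_add, hJ, smul_mulVec, one_mulVec,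
    dotProduct_smul, smul_eq_mul]
  nlinarith [mul_self_nonneg (∑ i, x i)]

end SignlessLaplacian

theorem stmt2 (n : ℕ) (hn : 3 ≤ n) (G : SimpleGraph (Fin n)) :
    (n : ℝ) - 2 ≤ kthEig (signlessLaplacian G) 2 + kthEig (signlessLaplacian Gᶜ) 2 := by
  have : Nonempty (Fin n) := ⟨⟨0, by omega⟩⟩
  obtain ⟨u, hu⟩ := (isHermitian_signlessLaplacian G).exists_forall_dotProduct_mulVec_le_kthEig_two
  obtain ⟨v, hv⟩ := (isHermitian_signlessLaplacian Gᶜ).exists_forall_dotProduct_mulVec_le_kthEig_two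
  obtain ⟨x, hx, hux, hvx⟩ := exists_ne_zero_dotProduct_eq_zero_of_two_lt u v
    (by rw [Fintype.card_fin]; omega)
  have hpos : 0 < x ⬝ᵥ x := by simpa using dotProduct_self_star_pos_iff.mpr hx
  refine le_of_mul_le_mul_right ?_ hpos
  calc ((n : ℝ) - 2) * (x ⬝ᵥ x)
      ≤ x ⬝ᵥ (signlessLaplacian G *ᵥ x) + x ⬝ᵥ (signlessLaplacian Gᶜ *ᵥ x) := by
        simpa [add_mulVec, dotProduct_add] using
          card_sub_two_mul_le_dotProduct_signlessLaplacian_add_compl G x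
    _ ≤ (kthEig (signlessLaplacian G) 2 + kthEig (signlessLaplacian Gᶜ) 2) * (x ⬝ᵥ x) := by
        rw [add_mul]
        exact add_le_add (hu x hux) (hv x hvx)
end

section
/- For any simple graph G on n ≥ 2 vertices, q_2(G) + q_2(\overline{G}) ≤ 2n - 4, where q_2 denotes the second largest signless Laplacian eigenvalue. -/
open Matrix

/-!
Since `Q(G)` is `N Nᵀ` for the vertex-edge incidence matrix `N`, it is positive semidefinite, and
the degrees and adjacencies of `G` and `Gᶜ` add up to `Q(G) + Q(Gᶜ) = (n - 2) I + J`. Hence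
`Q(G) ≤ (n - 2) I + J` in the Loewner order. As `J` has rank one, the span of the eigenvectors of
the two largest eigenvalues of `Q(G)` contains a nonzero vector orthogonal to the all-ones vector,
on which the quadratic form of `Q(G)` is at least `q₂(G)` times its squared norm and at most
`n - 2` times it. So `q₂(G) ≤ n - 2`, likewise `q₂(Gᶜ) ≤ n - 2`.
-/

namespace Matrix.IsHermitian

variable {V : Type*} [Fintype V] [DecidableEq V] {A : Matrix V V ℝ} (hA : A.IsHermitian)
include hA

lemma eigenvectorBasis_dotProduct (i j : V) :
    ⇑(hA.eigenvectorBasis i) ⬝ᵥ ⇑(hA.eigenvectorBasis j) = if i = j then 1 else 0 := by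
  simpa [EuclideanSpace.inner_eq_star_dotProduct, dotProduct_comm] using
    orthonormal_iff_ite.mp hA.eigenvectorBasis.orthonormal i j

/-- Test the Loewner inequality on a nonzero combination of the two eigenvectors that is
orthogonal to `u`. -/
lemma min_eigenvalues_le_of_posSemidef (u : V → ℝ) {c : ℝ}
    (hB : (c • 1 + vecMulVec u u - A).PosSemidef) {i j : V} (hij : i ≠ j) :
    min (hA.eigenvalues i) (hA.eigenvalues j) ≤ c := by
  set v := ⇑(hA.eigenvectorBasis i)
  set w := ⇑(hA.eigenvectorBasis j)
  have hvv : v ⬝ᵥ v = 1 := by simpa using hA.eigenvectorBasis_dotProduct i i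
  have hww : w ⬝ᵥ w = 1 := by simpa using hA.eigenvectorBasis_dotProduct j j
  have hvw : v ⬝ᵥ w = 0 := by simpa [hij] using hA.eigenvectorBasis_dotProduct i j
  have hwv : w ⬝ᵥ v = 0 := by rw [dotProduct_comm, hvw]
  have hAv : A *ᵥ v = hA.eigenvalues i • v := hA.mulVec_eigenvectorBasis i
  have hAw : A *ᵥ w = hA.eigenvalues j • w := hA.mulVec_eigenvectorBasis j
  obtain ⟨p, q, hpq, hu⟩ : ∃ p q : ℝ, 0 < p ^ 2 + q ^ 2 ∧ u ⬝ᵥ (p • v + q • w) = 0 := by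
    by_cases h : u ⬝ᵥ w = 0 ∧ u ⬝ᵥ v = 0
    · exact ⟨1, 0, by norm_num, by simp [h.2]⟩
    · refine ⟨u ⬝ᵥ w, -(u ⬝ᵥ v), ?_, ?_⟩
      · rcases not_and_or.mp h with h | h <;>
          nlinarith [sq_pos_of_ne_zero h, sq_nonneg (u ⬝ᵥ v), sq_nonneg (u ⬝ᵥ w)]
      · simp only [dotProduct_add, dotProduct_smul, smul_eq_mul]
        ring
  set x := p • v + q • w
  have hxx : x ⬝ᵥ x = p ^ 2 + q ^ 2 := by
    simp only [x, dotProduct_add, add_dotProduct, dotProduct_smul, smul_dotProduct, hvv, hww, hvw,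
      hwv, smul_eq_mul]
    ring
  have hxAx : x ⬝ᵥ (A *ᵥ x) = hA.eigenvalues i * p ^ 2 + hA.eigenvalues j * q ^ 2 := by
    simp only [x, mulVec_add, mulVec_smul, hAv, hAw, dotProduct_add,
      add_dotProduct, dotProduct_smul, smul_dotProduct, hvv, hww, hvw, hwv, smul_eq_mul]
    ring
  have hxBx : x ⬝ᵥ ((c • 1 + vecMulVec u u - A) *ᵥ x) = c * (p ^ 2 + q ^ 2) -
      (hA.eigenvalues i * p ^ 2 + hA.eigenvalues j * q ^ 2) := by
    rw [sub_mulVec, add_mulVec, smul_mulVec, one_mulVec, vecMulVec_mulVec, hu, dotProduct_sub,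
      dotProduct_add, hxAx, dotProduct_smul, hxx]
    simp
  have hmin : min (hA.eigenvalues i) (hA.eigenvalues j) * (p ^ 2 + q ^ 2) ≤
      hA.eigenvalues i * p ^ 2 + hA.eigenvalues j * q ^ 2 := by
    nlinarith [min_le_left (hA.eigenvalues i) (hA.eigenvalues j),
      min_le_right (hA.eigenvalues i) (hA.eigenvalues j), sq_nonneg p, sq_nonneg q]
  have hx := hB.dotProduct_mulVec_nonneg x
  rw [star_trivial, hxBx] at hx
  exact le_of_mul_le_mul_right (by linarith) hpq

end Matrix.IsHermitian

section kthEig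

variable {V : Type*} [Fintype V] [DecidableEq V] {A : Matrix V V ℝ}

lemma sort_eigMultiset_eq_ofFn (hA : A.IsHermitian) :
    (eigMultiset A).sort (· ≥ ·) = List.ofFn hA.eigenvalues₀ := by
  have h := hA.sort_roots_charpoly_eq_eigenvalues₀
  rw [hA.roots_charpoly_eq_eigenvalues] at h
  rw [eigMultiset, dif_pos hA]
  simpa using h

lemma kthEig_succ_eq_eigenvalues₀ (hA : A.IsHermitian) {k : ℕ} (hk : k < Fintype.card V) :
    kthEig A (k + 1) = hA.eigenvalues₀ ⟨k, hk⟩ := by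
  simp [kthEig, sort_eigMultiset_eq_ofFn hA, hk]

lemma kthEig_two_le_of_posSemidef (hA : A.IsHermitian) (hV : 2 ≤ Fintype.card V) (u : V → ℝ)
    {c : ℝ} (hB : (c • 1 + vecMulVec u u - A).PosSemidef) :
    kthEig A 2 ≤ c := by
  set e := Fintype.equivOfCardEq (Fintype.card_fin (Fintype.card V))
  have h := hA.min_eigenvalues_le_of_posSemidef u hB (i := e ⟨0, by omega⟩) (j := e ⟨1, hV⟩)
    (e.injective.ne (by simp))
  rw [kthEig_succ_eq_eigenvalues₀ hA hV]
  simpa [Matrix.IsHermitian.eigenvalues, e,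
    hA.eigenvalues₀_antitone (show (⟨0, by omega⟩ : Fin _) ≤ ⟨1, hV⟩ by simp)] using h

end kthEig

namespace SimpleGraph

variable {V : Type*} [Fintype V] [DecidableEq V] (G : SimpleGraph V)

lemma signlessLaplacian_eq_incMatrix_mul_transpose [DecidableRel G.Adj] :
    signlessLaplacian G = G.incMatrix ℝ * (G.incMatrix ℝ)ᵀ := by
  rw [incMatrix_mul_transpose, signlessLaplacian]
  ext i j
  by_cases hij : i = j
  · subst hij
    simp only [Matrix.add_apply, diagonal_apply_eq, adjMatrix_apply, SimpleGraph.irrefl,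
      ↓reduceIte, add_zero, of_apply, Nat.cast_inj]
    -- the two degrees are computed with different `DecidableRel G.Adj` instances
    congr!
  · simp [hij]

lemma signlessLaplacian_posSemidef : (signlessLaplacian G).PosSemidef := by
  classical
  simpa [G.signlessLaplacian_eq_incMatrix_mul_transpose] using
    posSemidef_self_mul_conjTranspose (G.incMatrix ℝ)

lemma signlessLaplacian_add_signlessLaplacian_compl :
    signlessLaplacian G + signlessLaplacian Gᶜ =
      ((Fintype.card V : ℝ) - 2) • 1 + vecMulVec 1 1 := by
  classical
  ext i j
  by_cases hij : i = j
  · subst hij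
    have hdeg := G.degree_lt_card_verts i
    simp only [signlessLaplacian, Matrix.add_apply, diagonal_apply_eq, adjMatrix_apply,
      SimpleGraph.irrefl, ↓reduceIte, add_zero, vecMulVec_one, Matrix.smul_apply, one_apply_eq,
      smul_eq_mul, mul_one, replicateCol_apply, Pi.one_apply]
    rw [degree_compl, Nat.cast_sub (by omega), Nat.cast_sub (by omega)]
    ring
  · by_cases hadj : G.Adj i j <;> simp [signlessLaplacian, hij, hadj]

lemma kthEig_two_signlessLaplacian_le (hV : 2 ≤ Fintype.card V) :
    kthEig (signlessLaplacian G) 2 ≤ Fintype.card V - 2 := by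
  refine kthEig_two_le_of_posSemidef G.signlessLaplacian_posSemidef.isHermitian hV 1 ?_
  rw [← G.signlessLaplacian_add_signlessLaplacian_compl, add_sub_cancel_left]
  exact Gᶜ.signlessLaplacian_posSemidef

end SimpleGraph

theorem stmt5 (n : ℕ) (hn : 2 ≤ n) (G : SimpleGraph (Fin n)) :
    kthEig (signlessLaplacian G) 2 + kthEig (signlessLaplacian Gᶜ) 2 ≤ 2 * (n : ℝ) - 4 := by
  have hV : 2 ≤ Fintype.card (Fin n) := by rwa [Fintype.card_fin]
  have hG := G.kthEig_two_signlessLaplacian_le hV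
  have hGc := Gᶜ.kthEig_two_signlessLaplacian_le hV
  rw [Fintype.card_fin] at hG hGc
  linarith
end

section
/- Let G be a simple graph and let S be a set of at least 2 vertices of G that is a clique (every two distinct vertices of S are adjacent) such that all vertices of S have the same set of neighbors outside S. Then all vertices of S have a common degree d, and d - 1 is an eigenvalue of the signless Laplacian Q(G) with multiplicity at least |S| - 1. -/
open Matrix

/-!
Two distinct vertices `u, v` of `S` are adjacent and have the same neighbours besides each
other, so the transposition `u ↔ v` maps `N(u)` onto `N(v)`: they have a common degree `d`, and
an entrywise computation gives `Q (e_u - e_v) = (d - 1) (e_u - e_v)`. Fixing `u ∈ S`, the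
`|S| - 1` vectors `e_u - e_v` are linearly independent, and the dimension of an eigenspace is at
most the multiplicity of the eigenvalue as a root of the characteristic polynomial, which for a
symmetric matrix is its multiplicity in the spectrum.
-/

lemma eigMultiset_eq_roots_charpoly {V : Type*} [Fintype V] [DecidableEq V]
    {A : Matrix V V ℝ} (hA : A.IsHermitian) : eigMultiset A = A.charpoly.roots := by
  rw [eigMultiset, dif_pos hA, hA.roots_charpoly_eq_eigenvalues]
  simp

lemma card_le_count_eigMultiset_of_linearIndependent {V ι : Type*} [Fintype V] [DecidableEq V]
    [Fintype ι] {A : Matrix V V ℝ} (hA : A.IsHermitian) {μ : ℝ} {x : ι → V → ℝ}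
    (hx : LinearIndependent ℝ x) (hAx : ∀ i, A *ᵥ x i = μ • x i) :
    Fintype.card ι ≤ (eigMultiset A).count μ := by
  have hspan : Submodule.span ℝ (Set.range x) ≤ Module.End.eigenspace (Matrix.toLin' A) μ :=
    Submodule.span_le.mpr <| Set.range_subset_iff.mpr fun i =>
      Module.End.mem_eigenspace_iff.mpr (hAx i)
  calc Fintype.card ι = Module.finrank ℝ (Submodule.span ℝ (Set.range x)) :=
        (finrank_span_eq_card hx).symm
    _ ≤ Module.finrank ℝ (Module.End.eigenspace (Matrix.toLin' A) μ) :=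
        Submodule.finrank_mono hspan
    _ ≤ (Matrix.toLin' A).charpoly.rootMultiplicity μ := LinearMap.finrank_eigenspace_le _ _
    _ = (eigMultiset A).count μ := by
      rw [Matrix.charpoly_toLin', eigMultiset_eq_roots_charpoly hA, Polynomial.count_roots]

lemma linearIndependent_single_sub_single {R V : Type*} [Ring R] [DecidableEq V]
    {s : Finset V} {u : V} (hu : u ∉ s) :
    LinearIndependent R (fun v : s => (Pi.single u 1 - Pi.single (v : V) 1 : V → R)) := by
  rw [Fintype.linearIndependent_iff]
  intro g hg i
  have hi : (i : V) ≠ u := fun h => hu (h ▸ i.2)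
  simpa [Finset.sum_apply, Pi.single_apply, hi, Subtype.coe_inj] using congrFun hg (i : V)

namespace SimpleGraph

variable {V : Type*} {G : SimpleGraph V} {u v : V}

lemma adj_iff_adj_of_twin_clique {S : Finset V} (hclique : ∀ u ∈ S, ∀ v ∈ S, u ≠ v → G.Adj u v)
    (hnbr : ∀ u ∈ S, ∀ v ∈ S, ∀ w ∉ S, (G.Adj u w ↔ G.Adj v w)) (hu : u ∈ S) (hv : v ∈ S)
    {w : V} (hwu : w ≠ u) (hwv : w ≠ v) : G.Adj u w ↔ G.Adj v w := by
  by_cases hw : w ∈ S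
  · exact iff_of_true (hclique u hu w hw hwu.symm) (hclique v hv w hw hwv.symm)
  · exact hnbr u hu v hv w hw

variable [Fintype V]

lemma gdeg_eq [DecidableRel G.Adj] (v : V) : gdeg G v = G.degree v := by
  unfold gdeg
  congr!

lemma signlessLaplacian_eq [DecidableEq V] [DecidableRel G.Adj] :
    signlessLaplacian G = diagonal (fun v => (G.degree v : ℝ)) + G.adjMatrix ℝ := by
  unfold signlessLaplacian
  congr!

lemma isHermitian_signlessLaplacian [DecidableEq V] (G : SimpleGraph V) :
    (signlessLaplacian G).IsHermitian := by
  classical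
  rw [signlessLaplacian_eq]
  exact (isHermitian_diagonal _).add (isHermitian_iff_isSymm.mpr G.isSymm_adjMatrix)

variable [DecidableRel G.Adj]

lemma degree_eq_of_adj_of_twin (huv : G.Adj u v)
    (htwin : ∀ w, w ≠ u → w ≠ v → (G.Adj u w ↔ G.Adj v w)) : G.degree u = G.degree v := by
  classical
  refine Finset.card_equiv (Equiv.swap u v) fun w => ?_
  simp only [mem_neighborFinset]
  rcases eq_or_ne w u with rfl | hwu
  · simp
  rcases eq_or_ne w v with rfl | hwv
  · simp [huv, huv.symm]
  rw [Equiv.swap_apply_of_ne_of_ne hwu hwv, htwin w hwu hwv]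

lemma signlessLaplacian_mulVec_single_sub_single [DecidableEq V] (huv : G.Adj u v)
    (htwin : ∀ w, w ≠ u → w ≠ v → (G.Adj u w ↔ G.Adj v w)) :
    signlessLaplacian G *ᵥ (Pi.single u 1 - Pi.single v 1) =
      ((G.degree u : ℝ) - 1) • (Pi.single u 1 - Pi.single v 1 : V → ℝ) := by
  have hdeg := degree_eq_of_adj_of_twin huv htwin
  ext w
  rw [signlessLaplacian_eq, add_mulVec, Pi.add_apply, mulVec_diagonal, mulVec_sub,
    mulVec_single_one, mulVec_single_one]
  rcases eq_or_ne w u with rfl | hwu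
  · simp [huv, huv.ne]
    ring
  rcases eq_or_ne w v with rfl | hwv
  · simp [huv.symm, huv.ne.symm, hdeg]
    ring
  simp [hwu, hwv, G.adj_comm w, htwin w hwu hwv]

end SimpleGraph

open SimpleGraph in
theorem stmt6 {V : Type*} [Fintype V] [DecidableEq V] (G : SimpleGraph V)
    (S : Finset V) (hS : 2 ≤ S.card)
    (hclique : ∀ u ∈ S, ∀ v ∈ S, u ≠ v → G.Adj u v)
    (hnbr : ∀ u ∈ S, ∀ v ∈ S, ∀ w ∉ S, (G.Adj u w ↔ G.Adj v w)) :
    ∃ d : ℕ, (∀ v ∈ S, gdeg G v = d) ∧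
      S.card - 1 ≤ (eigMultiset (signlessLaplacian G)).count ((d : ℝ) - 1) := by
  classical
  obtain ⟨u, hu⟩ : S.Nonempty := Finset.card_pos.mp (by omega)
  have htwin : ∀ v ∈ S, ∀ w, w ≠ u → w ≠ v → (G.Adj u w ↔ G.Adj v w) :=
    fun v hv _ => adj_iff_adj_of_twin_clique hclique hnbr hu hv
  refine ⟨G.degree u, fun v hv => ?_, ?_⟩
  · rw [gdeg_eq]
    rcases eq_or_ne v u with rfl | hvu
    · rfl
    · exact (degree_eq_of_adj_of_twin (hclique u hu v hv hvu.symm) (htwin v hv)).symm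
  · have hcard : Fintype.card (S.erase u) = S.card - 1 := by
      rw [Fintype.card_coe, Finset.card_erase_of_mem hu]
    rw [← hcard]
    refine card_le_count_eigMultiset_of_linearIndependent G.isHermitian_signlessLaplacian
      (linearIndependent_single_sub_single (Finset.notMem_erase u S)) fun v => ?_
    obtain ⟨hvu, hv⟩ := Finset.mem_erase.mp v.2
    exact signlessLaplacian_mulVec_single_sub_single (hclique u hu v hv hvu.symm) (htwin v hv)
end

section
/- Let G be a simple graph with maximum degree d_1 and second maximum degree d_2 (i.e., d_2 is the second largest value in the degree sequence, with multiplicity). Then the second largest signless Laplacian eigenvalue satisfies q_2(G) ≥ d_2 - 1. -/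
open Matrix

/-!
Take two vertices `u ≠ v` of degree at least `d₂`. Some nonzero `x = a eᵤ + b eᵥ` is orthogonal
to an eigenvector for `q₁`, so `xᵀ Q x ≤ q₂ ‖x‖²`. On the other hand
`xᵀ Q x = dᵤ a² + 2 [u ∼ v] a b + dᵥ b² ≥ (d₂ - 1)(a² + b²)`, because `2 |a b| ≤ a² + b²`.
-/

namespace List

variable {α : Type*} [LinearOrder α] {l : List α}

theorem SortedGE.countP_getD_lt_le (hl : l.SortedGE) (i : ℕ) (d : α) :
    l.countP (fun x => l.getD i d < x) ≤ i := by
  rcases lt_or_ge i l.length with hi | hi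
  · rw [getD_eq_getElem l d hi]
    set p := fun x => decide (l[i] < x)
    have hdrop : (l.drop i).countP p = 0 := by
      rw [countP_eq_zero]
      intro x hx
      obtain ⟨k, hk, rfl⟩ := mem_iff_getElem.mp hx
      simpa [p] using hl.getElem_ge_getElem_of_le (Nat.le_add_right i k)
    calc l.countP p = (l.take i).countP p + (l.drop i).countP p := by
          rw [← countP_append, take_append_drop]
      _ ≤ i := by rw [hdrop, add_zero]; exact countP_le_length.trans (length_take_le _ _)
  · exact countP_le_length.trans hi

theorem SortedGE.lt_countP_le_getD (hl : l.SortedGE) {i : ℕ} (hi : i < l.length) (d : α) :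
    i < l.countP (fun x => l.getD i d ≤ x) := by
  have htake : ∀ x ∈ l.take (i + 1), l.getD i d ≤ x := by
    intro x hx
    obtain ⟨j, hj, rfl⟩ := mem_take_iff_getElem.mp hx
    rw [getD_eq_getElem l d hi]
    exact hl.getElem_ge_getElem_of_le (by omega)
  calc i < (l.take (i + 1)).length := by simp [hi]
    _ = (l.take (i + 1)).countP (fun x => l.getD i d ≤ x) :=
        (countP_eq_length.mpr (by simpa using htake)).symm
    _ ≤ l.countP (fun x => l.getD i d ≤ x) := (take_sublist _ _).countP_le

end List

namespace Multiset

variable {α : Type*} [LinearOrder α] (s : Multiset α)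

theorem countP_getD_sort_lt_le (i : ℕ) (d : α) :
    s.countP (fun x => (s.sort (· ≥ ·)).getD i d < x) ≤ i := by
  have h := (pairwise_sort s (· ≥ ·)).sortedGE.countP_getD_lt_le i d
  rwa [← coe_countP, sort_eq] at h

theorem lt_countP_le_getD_sort {i : ℕ} (hi : i < card s) (d : α) :
    i < s.countP (fun x => (s.sort (· ≥ ·)).getD i d ≤ x) := by
  have h := (pairwise_sort s (· ≥ ·)).sortedGE.lt_countP_le_getD (by rwa [length_sort]) d
  rwa [← coe_countP, sort_eq] at h

end Multiset

namespace Fintype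

variable {ι α : Type*} [Fintype ι] [LinearOrder α]

theorem exists_ne_getD_sort_one_le (f : ι → α) (hι : 1 < card ι) (d : α) :
    ∃ u v, u ≠ v ∧ ((Finset.univ.val.map f).sort (· ≥ ·)).getD 1 d ≤ f u ∧
      ((Finset.univ.val.map f).sort (· ≥ ·)).getD 1 d ≤ f v := by
  have h := (Finset.univ.val.map f).lt_countP_le_getD_sort (i := 1) (by simpa using hι) d
  rw [Multiset.countP_map, ← Finset.filter_val, Finset.card_val] at h
  obtain ⟨u, hu, v, hv, huv⟩ := Finset.one_lt_card.mp h
  exact ⟨u, v, huv, (Finset.mem_filter.mp hu).2, (Finset.mem_filter.mp hv).2⟩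

theorem exists_forall_ne_le_getD_sort_one [Nonempty ι] (f : ι → α) (d : α) :
    ∃ i₀, ∀ i ≠ i₀, f i ≤ ((Finset.univ.val.map f).sort (· ≥ ·)).getD 1 d := by
  have h := (Finset.univ.val.map f).countP_getD_sort_lt_le 1 d
  rw [Multiset.countP_map, ← Finset.filter_val, Finset.card_val] at h
  obtain ⟨i₀, hi₀⟩ := Finset.card_le_one_iff_subset_singleton.mp h
  refine ⟨i₀, fun i hi => not_lt.mp fun hlt => hi ?_⟩
  simpa using hi₀ (Finset.mem_filter.mpr ⟨Finset.mem_univ i, hlt⟩)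

end Fintype

namespace Matrix.IsHermitian

variable {n : Type*} [Fintype n] [DecidableEq n] {A : Matrix n n ℝ} (hA : A.IsHermitian)

theorem sum_dotProduct_eigenvectorBasis_smul (x : n → ℝ) :
    ∑ j, (x ⬝ᵥ ⇑(hA.eigenvectorBasis j)) • ⇑(hA.eigenvectorBasis j) = x := by
  have h := congrArg WithLp.ofLp (hA.eigenvectorBasis.sum_repr (WithLp.toLp 2 x))
  simpa [OrthonormalBasis.repr_apply_apply, EuclideanSpace.inner_eq_star_dotProduct] using h

theorem dotProduct_mulVec_eq_sum (x : n → ℝ) :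
    x ⬝ᵥ A *ᵥ x = ∑ j, hA.eigenvalues j * (x ⬝ᵥ ⇑(hA.eigenvectorBasis j)) ^ 2 := by
  nth_rw 2 [← hA.sum_dotProduct_eigenvectorBasis_smul x]
  simp only [mulVec_sum, mulVec_smul, mulVec_eigenvectorBasis, dotProduct_sum, dotProduct_smul,
    smul_eq_mul]
  exact Finset.sum_congr rfl fun j _ => by ring

theorem dotProduct_self_eq_sum (x : n → ℝ) :
    x ⬝ᵥ x = ∑ j, (x ⬝ᵥ ⇑(hA.eigenvectorBasis j)) ^ 2 := by
  nth_rw 2 [← hA.sum_dotProduct_eigenvectorBasis_smul x]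
  simp only [dotProduct_sum, dotProduct_smul, smul_eq_mul, sq]

theorem dotProduct_mulVec_le {c : ℝ} {x : n → ℝ}
    (h : ∀ j, hA.eigenvalues j ≤ c ∨ x ⬝ᵥ ⇑(hA.eigenvectorBasis j) = 0) :
    x ⬝ᵥ A *ᵥ x ≤ c * (x ⬝ᵥ x) := by
  rw [hA.dotProduct_mulVec_eq_sum, hA.dotProduct_self_eq_sum, Finset.mul_sum]
  refine Finset.sum_le_sum fun j _ => ?_
  rcases h j with hj | hj
  · exact mul_le_mul_of_nonneg_right hj (sq_nonneg _)
  · simp [hj]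

end Matrix.IsHermitian

namespace Matrix

variable {n R : Type*} [Fintype n] [DecidableEq n]

theorem single_add_single_dotProduct_mulVec [CommRing R] (A : Matrix n n R) (u v : n) (a b : R) :
    (Pi.single u a + Pi.single v b) ⬝ᵥ A *ᵥ (Pi.single u a + Pi.single v b) =
      A u u * a ^ 2 + (A u v + A v u) * a * b + A v v * b ^ 2 := by
  simp only [mulVec_add, mulVec_single, add_dotProduct, dotProduct_add, single_dotProduct]
  simp only [Pi.smul_apply, col_apply, MulOpposite.smul_eq_mul_unop, MulOpposite.unop_op]
  ring

theorem single_add_single_dotProduct_self [CommRing R] {u v : n} (huv : u ≠ v) (a b : R) :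
    (Pi.single u a + Pi.single v b) ⬝ᵥ (Pi.single u a + Pi.single v b) = a ^ 2 + b ^ 2 := by
  simp [dotProduct_add, huv, huv.symm, sq]

theorem exists_single_add_single_dotProduct_eq_zero (w : n → ℝ) (u v : n) :
    ∃ a b : ℝ, 0 < a ^ 2 + b ^ 2 ∧ (Pi.single u a + Pi.single v b) ⬝ᵥ w = 0 := by
  simp only [add_dotProduct, single_dotProduct]
  by_cases hu : w u = 0
  · exact ⟨1, 0, by norm_num, by simp [hu]⟩
  · exact ⟨w v, -w u, by nlinarith [sq_pos_of_ne_zero hu, sq_nonneg (w v)], by ring⟩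

end Matrix

section SignlessLaplacian

variable {V : Type*} [Fintype V] [DecidableEq V] (G : SimpleGraph V)

theorem signlessLaplacian_isHermitian : (signlessLaplacian G).IsHermitian := by
  classical
  ext i j
  by_cases h : i = j
  · subst h; simp [signlessLaplacian]
  · simp [signlessLaplacian, h, Ne.symm h, G.adj_comm]

theorem signlessLaplacian_apply_self (u : V) : signlessLaplacian G u u = gdeg G u := by
  simp [signlessLaplacian, gdeg]

theorem signlessLaplacian_apply_mem_Icc_of_ne {u v : V} (huv : u ≠ v) :
    signlessLaplacian G u v ∈ Set.Icc 0 1 := by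
  classical
  by_cases h : G.Adj u v <;> simp [signlessLaplacian, huv, h]

theorem le_single_add_single_dotProduct_signlessLaplacian_mulVec {u v : V} (huv : u ≠ v) {d : ℝ}
    (hu : d ≤ gdeg G u) (hv : d ≤ gdeg G v) (a b : ℝ) :
    (d - 1) * (a ^ 2 + b ^ 2) ≤
      (Pi.single u a + Pi.single v b) ⬝ᵥ signlessLaplacian G *ᵥ (Pi.single u a + Pi.single v b) := by
  rw [single_add_single_dotProduct_mulVec, ← (signlessLaplacian_isHermitian G).apply v u,
    signlessLaplacian_apply_self, signlessLaplacian_apply_self]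
  obtain ⟨h0, h1⟩ := signlessLaplacian_apply_mem_Icc_of_ne G huv
  simp only [star_trivial]
  -- with `t = Q u v`: `2 t a b + a² + b² = t (a + b)² + (1 - t) (a² + b²)`
  nlinarith [mul_nonneg h0 (sq_nonneg (a + b)), mul_nonneg (sub_nonneg.mpr h1)
    (add_nonneg (sq_nonneg a) (sq_nonneg b)), mul_le_mul_of_nonneg_right hu (sq_nonneg a),
    mul_le_mul_of_nonneg_right hv (sq_nonneg b)]

end SignlessLaplacian

theorem kthEig_eq_getD_sort {V : Type*} [Fintype V] [DecidableEq V] {A : Matrix V V ℝ}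
    (hA : A.IsHermitian) (k : ℕ) :
    kthEig A k = ((Finset.univ.val.map hA.eigenvalues).sort (· ≥ ·)).getD (k - 1) 0 := by
  rw [kthEig, eigMultiset, dif_pos hA]

theorem stmt10 (n : ℕ) (hn : 2 ≤ n) (G : SimpleGraph (Fin n)) :
    (kthLargestDegree G 2 : ℝ) - 1 ≤ kthEig (signlessLaplacian G) 2 := by
  have hQ := signlessLaplacian_isHermitian G
  have : Nonempty (Fin n) := ⟨⟨0, by omega⟩⟩
  obtain ⟨u, v, huv, hu, hv⟩ :=
    Fintype.exists_ne_getD_sort_one_le (gdeg G) (by rw [Fintype.card_fin]; omega) 0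
  obtain ⟨i₀, hi₀⟩ := Fintype.exists_forall_ne_le_getD_sort_one hQ.eigenvalues 0
  obtain ⟨a, b, hab, horth⟩ :=
    exists_single_add_single_dotProduct_eq_zero ⇑(hQ.eigenvectorBasis i₀) u v
  have hlow := le_single_add_single_dotProduct_signlessLaplacian_mulVec G huv
    (d := kthLargestDegree G 2) (by exact_mod_cast hu) (by exact_mod_cast hv) a b
  have hup := hQ.dotProduct_mulVec_le (c := kthEig (signlessLaplacian G) 2)
    (x := Pi.single u a + Pi.single v b) fun j => by
      by_cases hj : j = i₀
      · exact .inr (hj ▸ horth)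
      · exact .inl (kthEig_eq_getD_sort hQ 2 ▸ hi₀ j hj)
  rw [single_add_single_dotProduct_self huv] at hup
  exact le_of_mul_le_mul_right (hlow.trans hup) hab
end

section
/- Let B be a principal submatrix of a real symmetric n×n matrix A, obtained by selecting an m-element subset of indices. Then the eigenvalues of B interlace those of A: λ_i(A) ≥ λ_i(B) ≥ λ_{n-m+i}(A) for 1 ≤ i ≤ m, where eigenvalues are listed in non-increasing order. -/
open Matrix

/-!
Both inequalities come from one dimension count. Let `ι : ℝᵐ → ℝⁿ` be extension by zero along `f`,
an isometry with `⟪A (ι y), ι y⟫ = ⟪B y, y⟫`. If `y` is orthogonal to the eigenvectors of `B`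
after the `i`-th and `ι y` is orthogonal to the first `i - 1` eigenvectors of `A` (at most `m - 1`
linear conditions, so such `y ≠ 0` exists), then
`λᵢ(B) ‖y‖² ≤ ⟪B y, y⟫ = ⟪A (ι y), ι y⟫ ≤ λᵢ(A) ‖y‖²`. The lower bound is the same count with the
two ends of the spectra exchanged. Nothing but that compression identity enters, so the same holds
for any symmetric operator and its compression along an isometry.
-/

open Module RCLike
open scoped InnerProductSpace

namespace LinearMap.IsSymmetric

variable {𝕜 E : Type*} [RCLike 𝕜] [NormedAddCommGroup E] [InnerProductSpace 𝕜 E]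
  [FiniteDimensional 𝕜 E] {T : E →ₗ[𝕜] E} {n : ℕ} (hT : T.IsSymmetric) (hn : finrank 𝕜 E = n)

theorem re_inner_apply_self_eq_sum (x : E) :
    re ⟪T x, x⟫_𝕜 = ∑ i, hT.eigenvalues hn i * ‖(hT.eigenvectorBasis hn).repr x i‖ ^ 2 := by
  rw [← (hT.eigenvectorBasis hn).repr.inner_map_map, PiLp.inner_apply, map_sum]
  refine Finset.sum_congr rfl fun i _ => ?_
  rw [hT.eigenvectorBasis_apply_self_apply, ← smul_eq_mul, inner_smul_left, conj_ofReal,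
    inner_self_eq_norm_sq_to_K]
  norm_cast

theorem re_inner_apply_self_le {c : ℝ} {x : E}
    (hx : ∀ i, c < hT.eigenvalues hn i → (hT.eigenvectorBasis hn).repr x i = 0) :
    re ⟪T x, x⟫_𝕜 ≤ c * ‖x‖ ^ 2 := by
  rw [hT.re_inner_apply_self_eq_sum hn, ← (hT.eigenvectorBasis hn).repr.norm_map,
    EuclideanSpace.norm_sq_eq, Finset.mul_sum]
  refine Finset.sum_le_sum fun i _ => ?_
  by_cases hi : c < hT.eigenvalues hn i
  · simp [hx i hi]
  · exact mul_le_mul_of_nonneg_right (not_lt.1 hi) (sq_nonneg _)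

theorem le_re_inner_apply_self {c : ℝ} {x : E}
    (hx : ∀ i, hT.eigenvalues hn i < c → (hT.eigenvectorBasis hn).repr x i = 0) :
    c * ‖x‖ ^ 2 ≤ re ⟪T x, x⟫_𝕜 := by
  rw [hT.re_inner_apply_self_eq_sum hn, ← (hT.eigenvectorBasis hn).repr.norm_map,
    EuclideanSpace.norm_sq_eq, Finset.mul_sum]
  refine Finset.sum_le_sum fun i _ => ?_
  by_cases hi : hT.eigenvalues hn i < c
  · simp [hx i hi]
  · exact mul_le_mul_of_nonneg_right (not_lt.1 hi) (sq_nonneg _)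

end LinearMap.IsSymmetric

theorem OrthonormalBasis.exists_ne_zero_repr_eq_zero {𝕜 E F ι κ : Type*} [RCLike 𝕜]
    [NormedAddCommGroup E] [InnerProductSpace 𝕜 E] [NormedAddCommGroup F]
    [InnerProductSpace 𝕜 F] [FiniteDimensional 𝕜 F] [Fintype ι] [Fintype κ]
    (b : OrthonormalBasis ι 𝕜 F) (c : OrthonormalBasis κ 𝕜 E) (L : F →ₗ[𝕜] E)
    (s : Finset ι) (t : Finset κ) (hst : s.card + t.card < finrank 𝕜 F) :
    ∃ y ≠ 0, (∀ i ∈ s, b.repr y i = 0) ∧ ∀ k ∈ t, c.repr (L y) k = 0 := by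
  let φ : F →ₗ[𝕜] (s → 𝕜) × (t → 𝕜) :=
    (LinearMap.pi fun i : s => b.toBasis.coord i).prod
      (LinearMap.pi fun k : t => (c.toBasis.coord k).comp L)
  have hφ : finrank 𝕜 ((s → 𝕜) × (t → 𝕜)) < finrank 𝕜 F := by simpa using hst
  obtain ⟨y, hy, hy0⟩ :=
    Submodule.exists_mem_ne_zero_of_ne_bot (LinearMap.ker_ne_bot_of_finrank_lt (f := φ) hφ)
  refine ⟨y, hy0, fun i hi => ?_, fun k hk => ?_⟩
  · simpa [φ] using congr_fun (congr_arg Prod.fst (LinearMap.mem_ker.1 hy)) ⟨i, hi⟩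
  · simpa [φ] using congr_fun (congr_arg Prod.snd (LinearMap.mem_ker.1 hy)) ⟨k, hk⟩

namespace LinearMap.IsSymmetric

variable {𝕜 E F : Type*} [RCLike 𝕜] [NormedAddCommGroup E] [InnerProductSpace 𝕜 E]
  [FiniteDimensional 𝕜 E] [NormedAddCommGroup F] [InnerProductSpace 𝕜 F] [FiniteDimensional 𝕜 F]
  {T : E →ₗ[𝕜] E} {S : F →ₗ[𝕜] F} {n m : ℕ} (hT : T.IsSymmetric) (hn : finrank 𝕜 E = n)
  (hS : S.IsSymmetric) (hm : finrank 𝕜 F = m)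

theorem eigenvalues_compression_le (ι : F →ₗᵢ[𝕜] E) (hι : ∀ y, ⟪T (ι y), ι y⟫_𝕜 = ⟪S y, y⟫_𝕜)
    {i : Fin m} {j : Fin n} (hji : (j : ℕ) ≤ i) :
    hS.eigenvalues hm i ≤ hT.eigenvalues hn j := by
  obtain ⟨y, hy, hSy, hTy⟩ := (hS.eigenvectorBasis hm).exists_ne_zero_repr_eq_zero
    (hT.eigenvectorBasis hn) ι.toLinearMap (Finset.Ioi i) (Finset.Iio j)
    (by rw [Fin.card_Ioi, Fin.card_Iio, hm]; omega)
  have hS_ge : hS.eigenvalues hm i * ‖y‖ ^ 2 ≤ re ⟪S y, y⟫_𝕜 :=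
    hS.le_re_inner_apply_self hm fun k hk =>
      hSy k (Finset.mem_Ioi.2 ((hS.eigenvalues_antitone hm).reflect_lt hk))
  have hT_le : re ⟪T (ι y), ι y⟫_𝕜 ≤ hT.eigenvalues hn j * ‖ι y‖ ^ 2 :=
    hT.re_inner_apply_self_le hn fun k hk =>
      hTy k (Finset.mem_Iio.2 ((hT.eigenvalues_antitone hn).reflect_lt hk))
  rw [hι, ι.norm_map] at hT_le
  exact le_of_mul_le_mul_right (hS_ge.trans hT_le) (by positivity)

theorem le_eigenvalues_compression (ι : F →ₗᵢ[𝕜] E) (hι : ∀ y, ⟪T (ι y), ι y⟫_𝕜 = ⟪S y, y⟫_𝕜)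
    {i : Fin m} {j : Fin n} (hij : i + (n - m) ≤ (j : ℕ)) :
    hT.eigenvalues hn j ≤ hS.eigenvalues hm i := by
  obtain ⟨y, hy, hSy, hTy⟩ := (hS.eigenvectorBasis hm).exists_ne_zero_repr_eq_zero
    (hT.eigenvectorBasis hn) ι.toLinearMap (Finset.Iio i) (Finset.Ioi j)
    (by rw [Fin.card_Ioi, Fin.card_Iio, hm]; omega)
  have hS_le : re ⟪S y, y⟫_𝕜 ≤ hS.eigenvalues hm i * ‖y‖ ^ 2 :=
    hS.re_inner_apply_self_le hm fun k hk =>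
      hSy k (Finset.mem_Iio.2 ((hS.eigenvalues_antitone hm).reflect_lt hk))
  have hT_ge : hT.eigenvalues hn j * ‖ι y‖ ^ 2 ≤ re ⟪T (ι y), ι y⟫_𝕜 :=
    hT.le_re_inner_apply_self hn fun k hk =>
      hTy k (Finset.mem_Ioi.2 ((hT.eigenvalues_antitone hn).reflect_lt hk))
  rw [hι, ι.norm_map] at hT_ge
  exact le_of_mul_le_mul_right (hT_ge.trans hS_le) (by positivity)

end LinearMap.IsSymmetric

theorem Matrix.inner_toEuclideanLin_right {𝕜 m n : Type*} [RCLike 𝕜] [Fintype m]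
    [DecidableEq m] [Fintype n] [DecidableEq n] (M : Matrix m n 𝕜) (x : EuclideanSpace 𝕜 m)
    (y : EuclideanSpace 𝕜 n) :
    ⟪x, toEuclideanLin M y⟫_𝕜 = ⟪toEuclideanLin Mᴴ x, y⟫_𝕜 := by
  rw [toEuclideanLin_conjTranspose_eq_adjoint, LinearMap.adjoint_inner_left]

theorem Matrix.conjTranspose_submatrix_one_mul_mul {𝕜 ι κ : Type*} [RCLike 𝕜] [Fintype ι]
    [DecidableEq ι] {f : κ → ι} (A : Matrix ι ι 𝕜) :
    ((1 : Matrix ι ι 𝕜).submatrix id f)ᴴ * A * (1 : Matrix ι ι 𝕜).submatrix id f =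
      A.submatrix f f := by
  ext a b
  simp [mul_apply, one_apply]

section Submatrix

variable {𝕜 ι κ : Type*} [RCLike 𝕜] [Fintype ι] [DecidableEq ι] [Fintype κ] [DecidableEq κ]
  {f : κ → ι}

theorem Matrix.inner_toEuclideanLin_submatrix_one (A : Matrix ι ι 𝕜) (x y : EuclideanSpace 𝕜 κ) :
    ⟪toEuclideanLin A (toEuclideanLin ((1 : Matrix ι ι 𝕜).submatrix id f) x),
        toEuclideanLin ((1 : Matrix ι ι 𝕜).submatrix id f) y⟫_𝕜 =
      ⟪toEuclideanLin (A.submatrix f f) x, y⟫_𝕜 := by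
  rw [inner_toEuclideanLin_right, ← conjTranspose_submatrix_one_mul_mul, toLpLin_mul_same,
    toLpLin_mul_same]
  rfl

noncomputable def EuclideanSpace.extendByZero (hf : f.Injective) :
    EuclideanSpace 𝕜 κ →ₗᵢ[𝕜] EuclideanSpace 𝕜 ι :=
  (toEuclideanLin ((1 : Matrix ι ι 𝕜).submatrix id f)).isometryOfInner fun x y => by
    have h := inner_toEuclideanLin_submatrix_one (f := f) (1 : Matrix ι ι 𝕜) x y
    simpa [submatrix_one _ hf] using h

theorem Matrix.IsHermitian.eigenvalues₀_submatrix_le {A : Matrix ι ι 𝕜} (hA : A.IsHermitian)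
    (hf : f.Injective) {i : Fin (Fintype.card κ)}
    {j : Fin (Fintype.card ι)} (hji : (j : ℕ) ≤ i) :
    (hA.submatrix f).eigenvalues₀ i ≤ hA.eigenvalues₀ j :=
  LinearMap.IsSymmetric.eigenvalues_compression_le _ _ _ _ (EuclideanSpace.extendByZero hf)
    (fun y => inner_toEuclideanLin_submatrix_one A y y) hji

theorem Matrix.IsHermitian.le_eigenvalues₀_submatrix {A : Matrix ι ι 𝕜} (hA : A.IsHermitian)
    (hf : f.Injective) {i : Fin (Fintype.card κ)}
    {j : Fin (Fintype.card ι)} (hij : i + (Fintype.card ι - Fintype.card κ) ≤ (j : ℕ)) :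
    hA.eigenvalues₀ j ≤ (hA.submatrix f).eigenvalues₀ i :=
  LinearMap.IsSymmetric.le_eigenvalues_compression _ _ _ _ (EuclideanSpace.extendByZero hf)
    (fun y => inner_toEuclideanLin_submatrix_one A y y) hij

end Submatrix

theorem kthEig_add_one {ι : Type*} [Fintype ι] [DecidableEq ι] {A : Matrix ι ι ℝ}
    (hA : A.IsHermitian) (k : ℕ) (hk : k < Fintype.card ι) :
    kthEig A (k + 1) = hA.eigenvalues₀ ⟨k, hk⟩ := by
  have h : eigMultiset A = A.charpoly.roots.map re := by
    rw [eigMultiset, dif_pos hA, hA.roots_charpoly_eq_eigenvalues, Multiset.map_map]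
    simp
  rw [kthEig, h, hA.sort_roots_charpoly_eq_eigenvalues₀, Nat.add_sub_cancel]
  simp [hk]

theorem stmt19 (n m : ℕ) (A : Matrix (Fin n) (Fin n) ℝ) (hA : A.IsHermitian)
    (f : Fin m → Fin n) (hf : Function.Injective f) :
    ∀ i, 1 ≤ i → i ≤ m →
      kthEig (A.submatrix f f) i ≤ kthEig A i ∧
      kthEig A (n - m + i) ≤ kthEig (A.submatrix f f) i := by
  intro i hi him
  obtain ⟨k, rfl⟩ : ∃ k, i = k + 1 := ⟨i - 1, by omega⟩
  have hmn : m ≤ n := by simpa using Fintype.card_le_of_injective f hf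
  rw [show n - m + (k + 1) = n - m + k + 1 by omega,
    kthEig_add_one (hA.submatrix f) k (by rw [Fintype.card_fin]; omega),
    kthEig_add_one hA k (by rw [Fintype.card_fin]; omega),
    kthEig_add_one hA (n - m + k) (by rw [Fintype.card_fin]; omega)]
  exact ⟨hA.eigenvalues₀_submatrix_le hf le_rfl,
    hA.le_eigenvalues₀_submatrix hf (by simp only [Fintype.card_fin]; omega)⟩
end
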